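/- arXiv:1005.3460 — 5 statements merged into one kernel-verified Lean document; each statement's English description precedes it below -/
import Mathlib

section
/- If G is a finite subgroup of the multiplicative group of a division ring D, then the natural number |G|, viewed as an element of D (i.e., |G|·1), is nonzero. -/
/-! In characteristic `p` the Frobenius identity `(x - 1) ^ p = x ^ p - 1` shows that a reduced
ring has no nontrivial `p`-th roots of unity, so by Cauchy's theorem `p` cannot divide the order
of a finite group of units. -/

section ReducedRing

variable {R : Type*} [Ring R] [IsReduced R]

theorem eq_one_of_pow_expChar_eq_one (p : ℕ) [ExpChar R p] {x : R} (hx : x ^ p = 1) : x = 1 := by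
  have hnil : IsNilpotent (x - 1) :=
    ⟨p, by rw [sub_pow_expChar_of_commute p (Commute.one_right x), hx, one_pow, sub_self]⟩
  exact sub_eq_zero.mp hnil.eq_zero

theorem orderOf_units_ne_charP (p : ℕ) [hp : Fact p.Prime] [CharP R p] (u : Rˣ) :
    orderOf u ≠ p := by
  intro hu
  have hpow : (u : R) ^ p = 1 := by
    rw [← Units.val_pow_eq_pow_val, ← hu, pow_orderOf_eq_one, Units.val_one]
  rw [Units.val_eq_one.mp (eq_one_of_pow_expChar_eq_one p hpow), orderOf_one] at hu
  exact hp.out.one_lt.ne hu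

theorem not_charP_dvd_card_of_finite_subgroup_units (p : ℕ) [Fact p.Prime] [CharP R p]
    (G : Subgroup Rˣ) [Finite G] : ¬ p ∣ Nat.card G := by
  intro hdvd
  obtain ⟨g, hg⟩ := exists_prime_orderOf_dvd_card' p hdvd
  exact orderOf_units_ne_charP p (g : Rˣ) ((Subgroup.orderOf_coe g).trans hg)

end ReducedRing

/-- The order of a finite multiplicative subgroup of a division ring,
viewed as an element of the division ring, is nonzero. -/
theorem card_of_finite_subgroup_ne_zero (D : Type*) [DivisionRing D]
    (G : Subgroup Dˣ) [Fintype G] :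
    (Fintype.card G : D) ≠ 0 := by
  intro h
  have hdvd : ringChar D ∣ Fintype.card G := (ringChar.spec D _).mp h
  rcases CharP.char_is_prime_or_zero D (ringChar D) with hprime | hzero
  · have := Fact.mk hprime
    exact not_charP_dvd_card_of_finite_subgroup_units (ringChar D) G
      (by rwa [Nat.card_eq_fintype_card])
  · exact Fintype.card_ne_zero (zero_dvd_iff.mp (hzero ▸ hdvd))
end

section
/- Let G be a finite subgroup of the multiplicative group of a division ring D, and suppose a, b ∈ D satisfy {g + a : g ∈ G} = {g·b : g ∈ G} as subsets of D. Then a = 0 or G is the trivial group. -/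
/-!
If `b = 0` then every `g + a` vanishes, so `G` is a single point. Otherwise `g ↦ g + a` and
`g ↦ g * b` are bijections of `G` onto the same set, so summing gives
`∑ g + |G| a = (∑ g) b`. The sum of a nontrivial finite subgroup of units is `0`, and `|G| ≠ 0`
in `D` because an element of order `char D = p` would satisfy `(g - 1)ᵖ = gᵖ - 1 = 0`.
Hence `|G| a = 0` and `a = 0`.
-/

open Finset

theorem Fintype.sum_eq_sum_of_range_eq {ι κ M : Type*} [Fintype ι] [Fintype κ]
    [AddCommMonoid M] {f : ι → M} {g : κ → M} (hf : f.Injective) (hg : g.Injective)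
    (h : Set.range f = Set.range g) : ∑ i, f i = ∑ j, g j :=
  Fintype.sum_equiv
    (((Equiv.ofInjective f hf).trans (Equiv.setCongr h)).trans (Equiv.ofInjective g hg).symm)
    f g fun i => (Equiv.apply_ofInjective_symm hg ⟨f i, h ▸ ⟨i, rfl⟩⟩).symm

/-- If `G` is a finite multiplicative subgroup of a division ring `D` and
`G + a = G·b` for some `a, b ∈ D`, then `a = 0` or `G` is trivial. -/
theorem shift_eq_dilate_imp (D : Type*) [DivisionRing D]
    (G : Subgroup Dˣ) [Fintype G] (a b : D)
    (h : {x : D | ∃ g ∈ G, ((g : D) + a = x)} =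
         {x : D | ∃ g ∈ G, ((g : D) * b = x)}) :
    a = 0 ∨ G = ⊥ := by
  have hrange : Set.range (fun g : G => ((g : Dˣ) : D) + a) =
      Set.range (fun g : G => ((g : Dˣ) : D) * b) := by
    simpa only [Set.ext_iff, Set.mem_range, Set.mem_ofPred_eq, Subtype.exists,
      exists_prop] using h
  have hval : (fun g : G => ((g : Dˣ) : D)).Injective :=
    Units.val_injective.comp Subtype.val_injective
  rcases eq_or_ne b 0 with rfl | hb
  · have hzero : ∀ g ∈ G, (g : D) + a = 0 := fun g hg => by
      obtain ⟨g', -, hg'⟩ := h.subset ⟨g, hg, rfl⟩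
      simpa using hg'.symm
    refine Or.inr ((Subgroup.eq_bot_iff_forall G).2 fun g hg => Units.ext ?_)
    exact add_right_cancel ((hzero g hg).trans (hzero 1 G.one_mem).symm)
  refine or_iff_not_imp_right.2 fun hG => ?_
  have hsum := Fintype.sum_eq_sum_of_range_eq ((add_left_injective a).comp hval)
    ((mul_left_injective₀ hb).comp hval) hrange
  simp only [Function.comp_apply] at hsum
  rw [sum_add_distrib, ← sum_mul, FiniteField.sum_subgroup_units_eq_zero hG, sum_const,
    card_univ, nsmul_eq_mul, zero_mul, zero_add] at hsum
  exact (mul_eq_zero.1 hsum).resolve_left (FiniteField.card_cast_subgroup_card_ne_zero G)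
end

section
/- If a division ring D of prime characteristic p contains a finite subgroup G of its multiplicative group, then G is cyclic. -/
/-!
Over the prime field `ZMod p`, the subalgebra of `D` generated by `G` is the linear span of `G`,
because `G` is closed under multiplication; so it is finite. A finite subring of a division ring
is a domain, hence a field by Wedderburn's little theorem, and a finite subgroup of the units of a
field is cyclic.
-/

theorem Algebra.finite_adjoin_of_finite_submonoid {K A : Type*} [CommSemiring K] [Finite K]
    [Semiring A] [Algebra K A] (M : Submonoid A) (hM : (M : Set A).Finite) :
    Finite (Algebra.adjoin K (M : Set A)) := by
  have : Module.Finite K (Algebra.adjoin K (M : Set A)).toSubmodule := by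
    rw [Algebra.adjoin_eq_span, Submonoid.closure_eq]
    exact Module.Finite.span_of_finite K hM
  exact Module.finite_of_finite K (M := (Algebra.adjoin K (M : Set A)).toSubmodule)

theorem Subgroup.isCyclic_of_forall_mem_finite_subring {D : Type*} [DivisionRing D]
    (S : Subring D) [Finite S] (G : Subgroup Dˣ) (hGS : ∀ g ∈ G, (g : D) ∈ S) : IsCyclic G := by
  let : Field S := (Finite.isDomain_to_isField S).toField
  let f : G →* S :=
    { toFun := fun g ↦ ⟨(g : Dˣ), hGS g g.2⟩
      map_one' := rfl
      map_mul' := fun _ _ ↦ rfl }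
  have hf : Function.Injective f := fun a b hab ↦
    Subtype.ext <| Units.ext <| congrArg Subtype.val hab
  have : Finite G := Finite.of_injective f hf
  exact isCyclic_of_injective_ringHom f hf

/-- A finite multiplicative subgroup of a division ring of prime
characteristic is cyclic. -/
theorem finite_subgroup_charP_isCyclic (D : Type*) [DivisionRing D] (p : ℕ)
    (hp : p.Prime) [CharP D p] (G : Subgroup Dˣ) [Finite G] :
    IsCyclic G := by
  have : Fact p.Prime := ⟨hp⟩
  let : Algebra (ZMod p) D := ZMod.algebra D p
  let M := G.toSubmonoid.map (Units.coeHom D)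
  have hM : (M : Set D).Finite := (Set.toFinite (G : Set Dˣ)).image _
  have : Finite (Algebra.adjoin (ZMod p) (M : Set D)) :=
    Algebra.finite_adjoin_of_finite_submonoid M hM
  exact G.isCyclic_of_forall_mem_finite_subring (Algebra.adjoin (ZMod p) (M : Set D)).toSubring
    fun g hg ↦ Algebra.subset_adjoin ⟨g, hg, rfl⟩
end

section
/- If a division ring D has prime characteristic p and G is a finite subgroup of the multiplicative group D^*, then p does not divide the order of G. -/
theorem charP_not_dvd_card_subgroup_general (D : Type*) [DivisionRing D] (p : ℕ)
    [CharP D p] (G : Subgroup Dˣ) [Fintype G] :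
    ¬ p ∣ Fintype.card G := fun hdvd =>
  FiniteField.card_cast_subgroup_card_ne_zero G ((CharP.cast_eq_zero_iff D p _).mpr hdvd)

/-- If a division ring has prime characteristic `p`, then `p` does not divide
the order of any finite multiplicative subgroup. -/
theorem charP_not_dvd_card_subgroup (D : Type*) [DivisionRing D] (p : ℕ)
    (hp : p.Prime) [CharP D p] (G : Subgroup Dˣ) [Fintype G] :
    ¬ p ∣ Fintype.card G :=
  charP_not_dvd_card_subgroup_general D p G
end

section
/- Let G be a nontrivial finite additive subgroup of a division ring D and let D_G = {a ∈ D : G·a ⊆ G}. Then D_G is a finite subfield of D (in particular, D_G is commutative). -/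
/-! For a nonzero `g₀ ∈ G`, the map `a ↦ g₀ * a` embeds `D_G` into the finite group `G`, so the
subring `D_G` is finite. A finite subring of a division ring is a finite domain, hence a field by
Wedderburn's little theorem; its inverses agree with those of `D`, so it is a subfield. -/

namespace AddSubgroup

variable {R : Type*} [Ring R]

def rightMulStabilizer (G : AddSubgroup R) : Subring R where
  carrier := {a | ∀ g ∈ G, g * a ∈ G}
  mul_mem' {a b} ha hb g hg := mul_assoc g a b ▸ hb _ (ha g hg)
  one_mem' g hg := (mul_one g).symm ▸ hg
  add_mem' {a b} ha hb g hg := (mul_add g a b).symm ▸ G.add_mem (ha g hg) (hb g hg)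
  zero_mem' g _ := (mul_zero g).symm ▸ G.zero_mem
  neg_mem' {a} ha g hg := (mul_neg g a).symm ▸ G.neg_mem (ha g hg)

theorem coe_rightMulStabilizer (G : AddSubgroup R) :
    (G.rightMulStabilizer : Set R) = {a | ∀ g ∈ G, g * a ∈ G} :=
  rfl

theorem finite_rightMulStabilizer [NoZeroDivisors R] (G : AddSubgroup R) [Finite G]
    [Nontrivial G] : Finite G.rightMulStabilizer := by
  obtain ⟨g₀, hg₀⟩ := exists_ne (0 : G)
  have hg₀ : (g₀ : R) ≠ 0 := fun h => hg₀ (Subtype.ext h)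
  refine Finite.of_injective (fun a : G.rightMulStabilizer => (⟨g₀ * a, a.2 g₀ g₀.2⟩ : G)) ?_
  intro a b hab
  exact Subtype.ext (mul_left_cancel₀ hg₀ (congrArg Subtype.val hab))

end AddSubgroup

namespace Subring

theorem mul_comm_of_finite {R : Type*} [Ring R] [IsDomain R] (S : Subring R) [Finite S]
    {a b : R} (ha : a ∈ S) (hb : b ∈ S) : a * b = b * a :=
  congrArg Subtype.val ((Finite.isDomain_to_isField S).mul_comm ⟨a, ha⟩ ⟨b, hb⟩)

variable {D : Type*} [DivisionRing D]

theorem inv_mem_of_finite (S : Subring D) [Finite S] {a : D} (ha : a ∈ S) : a⁻¹ ∈ S := by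
  rcases eq_or_ne a 0 with rfl | ha₀
  · rw [inv_zero]
    exact S.zero_mem
  obtain ⟨b, hb⟩ := (Finite.isDomain_to_isField S).mul_inv_cancel
    (a := ⟨a, ha⟩) (Subtype.coe_ne_coe.mp ha₀)
  rw [inv_eq_of_mul_eq_one_right (congrArg Subtype.val hb)]
  exact b.2

def toSubfieldOfFinite (S : Subring D) [Finite S] : Subfield D :=
  { S with inv_mem' := fun _ => S.inv_mem_of_finite }

end Subring

/-- For a nontrivial finite additive subgroup `G` of a division ring `D`,
the set `D_G = {a : G·a ⊆ G}` is a finite subfield of `D`; in particular it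
is commutative. -/
theorem DG_is_finite_subfield (D : Type*) [DivisionRing D]
    (G : AddSubgroup D) [Finite G] (hG : Nontrivial G) :
    (∃ S : Subfield D, (S : Set D) = {a : D | ∀ g ∈ G, g * a ∈ G}) ∧
    {a : D | ∀ g ∈ G, g * a ∈ G}.Finite ∧
    (∀ a ∈ {a : D | ∀ g ∈ G, g * a ∈ G}, ∀ b ∈ {a : D | ∀ g ∈ G, g * a ∈ G},
      a * b = b * a) := by
  have : Finite G.rightMulStabilizer := G.finite_rightMulStabilizer
  rw [← G.coe_rightMulStabilizer]
  exact ⟨⟨G.rightMulStabilizer.toSubfieldOfFinite, rfl⟩, Set.toFinite _,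
    fun a ha b hb => G.rightMulStabilizer.mul_comm_of_finite ha hb⟩
end
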